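/- arXiv:1508.06506 — 4 statements merged into one kernel-verified Lean document; each statement's English description precedes it below -/
import Mathlib

section
/- Let c, G, Λ > 0 and m_+ > 0 with √Λ < c²/(3Gm_+). Then the cubic equation in r given by r − 2Gm_+/c² − (Λ/3)r³ = 0 (equivalently κ(r, m_+) = 0 where κ(r, m_+) = 1 − 2Gm_+/(c²r) − (Λ/3)r²) has exactly two positive roots r_I < r_E, and κ(r, m_+) > 0 for r ∈ (r_I, r_E), κ(r, m_+) ≤ 0 for r ∈ (0, r_I] ∪ [r_E, ∞). -/
theorem stmt_7 (c G Λ mp : ℝ) (hc : 0 < c) (hG : 0 < G) (hΛ : 0 < Λ) (hmp : 0 < mp)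
    (hB : Real.sqrt Λ < c ^ 2 / (3 * G * mp)) :
    ∃ rI rE : ℝ, 0 < rI ∧ rI < rE ∧
      (1 - 2 * G * mp / (c ^ 2 * rI) - Λ / 3 * rI ^ 2 = 0) ∧
      (1 - 2 * G * mp / (c ^ 2 * rE) - Λ / 3 * rE ^ 2 = 0) ∧
      (∀ r : ℝ, rI < r → r < rE → 0 < 1 - 2 * G * mp / (c ^ 2 * r) - Λ / 3 * r ^ 2) ∧
      (∀ r : ℝ, 0 < r → (r ≤ rI ∨ rE ≤ r) →
        1 - 2 * G * mp / (c ^ 2 * r) - Λ / 3 * r ^ 2 ≤ 0) := by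
  have hc2 : (0:ℝ) < c ^ 2 := by positivity
  set a : ℝ := 2 * G * mp / c ^ 2 with ha
  set b : ℝ := Λ / 3 with hb
  have ha0 : 0 < a := by positivity
  have hb0 : 0 < b := by positivity
  set s := Real.sqrt Λ with hsdef
  have hs : 0 < s := Real.sqrt_pos.2 hΛ
  have hs2 : s ^ 2 = Λ := Real.sq_sqrt hΛ.le
  set f : ℝ → ℝ := fun r => r - a - b * r ^ 3 with hf
  have hcont : Continuous f := by fun_prop
  -- value at the max 1/s
  have hfstar : 0 < f (1 / s) := by
    have h1 : s * (3 * G * mp) < c ^ 2 := (lt_div_iff₀ (by positivity)).1 hB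
    have h2 : f (1 / s) = 2 / (3 * s) - a := by
      simp only [hf, hb, ← hs2]
      field_simp
      ring
    rw [h2, sub_pos, ha, div_lt_div_iff₀ hc2 (by positivity)]
    nlinarith
  have hf0 : f 0 < 0 := by simp [hf]; positivity
  have hfR : f (3 / s) < 0 := by
    have h2 : f (3 / s) = -(6 / s) - a := by
      simp only [hf, hb, ← hs2]
      field_simp
      ring
    rw [h2]
    have : 0 < 6 / s := by positivity
    linarith
  have hle1 : (0:ℝ) ≤ 1 / s := by positivity
  have hle2 : (1:ℝ) / s ≤ 3 / s := by
    gcongr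
    norm_num
  obtain ⟨rI, hrImem, hrIval⟩ :=
    intermediate_value_Ioo hle1 hcont.continuousOn (Set.mem_Ioo.2 ⟨hf0, hfstar⟩)
  obtain ⟨rE, hrEmem, hrEval⟩ :=
    intermediate_value_Ioo' hle2 hcont.continuousOn (Set.mem_Ioo.2 ⟨hfR, hfstar⟩)
  have hrI0 : 0 < rI := hrImem.1
  have hrIE : rI < rE := lt_trans hrImem.2 hrEmem.1
  have hrE0 : 0 < rE := lt_trans hrI0 hrIE
  have hI : rI - a - b * rI ^ 3 = 0 := hrIval
  have hE : rE - a - b * rE ^ 3 = 0 := hrEval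
  have hkey : b * (rI ^ 2 + rI * rE + rE ^ 2) = 1 := by
    have hne : rE - rI ≠ 0 := sub_ne_zero.2 hrIE.ne'
    have h : (rE - rI) * (1 - b * (rI ^ 2 + rI * rE + rE ^ 2)) = 0 := by
      linear_combination hE - hI
    rcases mul_eq_zero.1 h with h' | h'
    · exact absurd h' hne
    · linarith
  have hfact : ∀ r : ℝ, r - a - b * r ^ 3 = b * (r - rI) * (rE - r) * (r + rI + rE) := by
    intro r
    linear_combination hI - (r - rI) * hkey
  have hκ : ∀ r : ℝ, r ≠ 0 →
      1 - 2 * G * mp / (c ^ 2 * r) - b * r ^ 2 = (r - a - b * r ^ 3) / r := by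
    intro r hr
    rw [ha]
    field_simp
  refine ⟨rI, rE, hrI0, hrIE, ?_, ?_, ?_, ?_⟩
  · rw [hκ rI hrI0.ne', hI, zero_div]
  · rw [hκ rE hrE0.ne', hE, zero_div]
  · intro r h1 h2
    have hr0 : 0 < r := lt_trans hrI0 h1
    rw [hκ r hr0.ne']
    apply div_pos _ hr0
    rw [hfact r]
    have : 0 < r + rI + rE := by linarith
    exact mul_pos (mul_pos (mul_pos hb0 (sub_pos.2 h1)) (sub_pos.2 h2)) this
  · intro r hr hcase
    rw [hκ r hr.ne']
    apply div_nonpos_of_nonpos_of_nonneg _ hr.le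
    rw [hfact r]
    rcases hcase with h | h
    · have h1 : b * (r - rI) ≤ 0 := mul_nonpos_of_nonneg_of_nonpos hb0.le (by linarith)
      have h2 : 0 ≤ rE - r := by linarith
      have h3 : 0 ≤ r + rI + rE := by linarith
      exact mul_nonpos_of_nonpos_of_nonneg (mul_nonpos_of_nonpos_of_nonneg h1 h2) h3
    · have h1 : 0 ≤ b * (r - rI) := mul_nonneg hb0.le (by linarith)
      have h2 : rE - r ≤ 0 := by linarith
      have h3 : 0 ≤ r + rI + rE := by linarith
      exact mul_nonpos_of_nonpos_of_nonneg (mul_nonpos_of_nonneg_of_nonpos h1 h2) h3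
end

section
/- Let c, G, Λ, r_+, m_+, κ_+, Q_+ be positive reals with κ_+ = 1 − 2Gm_+/(c²r_+) − (Λ/3)r_+² and Q_+ = Gm_+ − (c²Λ/3)r_+³. Let u : [0, r_+] → ℝ be a C² function with u(r_+) = 0, u'(r_+) = −Q_+/(r_+²κ_+), and u''(r_+) = c²Λ/κ_+ + 2Q_+/(r_+³κ_+) + 2Q_+²/(c²r_+⁴κ_+²). Define g₀₀(r) = κ_+·exp(−2u(r)/c²) for r ≤ r_+ and g₀₀(r) = 1 − 2Gm_+/(c²r) − (Λ/3)r² for r > r_+. Then g₀₀ is continuous at r_+, its one-sided first derivatives at r_+ both equal 2Q_+/(c²r_+²), and its one-sided second derivatives at r_+ both equal −4Q_+/(c²r_+³) − 2Λ. Consequently g₀₀ is twice differentiable at r_+. -/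
open Set

theorem stmt_10 (c G Λ rp mp κp Qp : ℝ)
    (hc : 0 < c) (hG : 0 < G) (hΛ : 0 < Λ) (hrp : 0 < rp) (hmp : 0 < mp)
    (hκp : 0 < κp) (hQp : 0 < Qp)
    (hκdef : κp = 1 - 2 * G * mp / (c ^ 2 * rp) - Λ / 3 * rp ^ 2)
    (hQdef : Qp = G * mp - c ^ 2 * Λ / 3 * rp ^ 3)
    (u : ℝ → ℝ) (hu : ContDiff ℝ 2 u)
    (hu0 : u rp = 0)
    (hu1 : deriv u rp = -(Qp / (rp ^ 2 * κp)))
    (hu2 : deriv (deriv u) rp =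
      c ^ 2 * Λ / κp + 2 * Qp / (rp ^ 3 * κp) + 2 * Qp ^ 2 / (c ^ 2 * rp ^ 4 * κp ^ 2))
    (g : ℝ → ℝ)
    (hg : ∀ r : ℝ, g r = if r ≤ rp then κp * Real.exp (-2 * u r / c ^ 2)
      else 1 - 2 * G * mp / (c ^ 2 * r) - Λ / 3 * r ^ 2) :
    ContinuousAt g rp ∧
    HasDerivWithinAt g (2 * Qp / (c ^ 2 * rp ^ 2)) (Iic rp) rp ∧
    HasDerivWithinAt g (2 * Qp / (c ^ 2 * rp ^ 2)) (Ici rp) rp ∧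
    derivWithin (derivWithin g (Iic rp)) (Iic rp) rp = -(4 * Qp / (c ^ 2 * rp ^ 3)) - 2 * Λ ∧
    derivWithin (derivWithin g (Ici rp)) (Ici rp) rp = -(4 * Qp / (c ^ 2 * rp ^ 3)) - 2 * Λ ∧
    HasDerivAt g (2 * Qp / (c ^ 2 * rp ^ 2)) rp ∧
    HasDerivAt (deriv g) (-(4 * Qp / (c ^ 2 * rp ^ 3)) - 2 * Λ) rp := by
  have hc0 : (c:ℝ) ≠ 0 := hc.ne'
  have hc2 : (c:ℝ)^2 ≠ 0 := by positivity
  have hrp0 : rp ≠ 0 := hrp.ne'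
  have hκ0 : κp ≠ 0 := hκp.ne'
  have hud : Differentiable ℝ u := hu.differentiable (by norm_num)
  have hud2 : Differentiable ℝ (deriv u) := by
    have h1 : ContDiff ℝ ((1:WithTop ℕ∞)+1) u := by convert hu using 2; norm_num
    exact ((contDiff_succ_iff_deriv.mp h1).2.2).differentiable one_ne_zero
  set f₁ : ℝ → ℝ := fun r => κp * Real.exp (-2 * u r / c ^ 2) with hf₁
  set f₂ : ℝ → ℝ := fun r => 1 - 2 * G * mp / (c ^ 2 * r) - Λ / 3 * r ^ 2 with hf₂
  set p1 : ℝ → ℝ := fun r => κp * (Real.exp (-2 * u r / c ^ 2) * (-2 * deriv u r / c ^ 2)) with hp1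
  set p2 : ℝ → ℝ := fun r => 2 * G * mp / (c ^ 2 * r ^ 2) - 2 * Λ / 3 * r with hp2
  set D : ℝ → ℝ := fun r => if r ≤ rp then p1 r else p2 r with hD
  set d : ℝ := 2 * Qp / (c ^ 2 * rp ^ 2) with hd
  set s : ℝ := -(4 * Qp / (c ^ 2 * rp ^ 3)) - 2 * Λ with hs
  have hv : ∀ r : ℝ, HasDerivAt (fun r => -2 * u r / c ^ 2) (-2 * deriv u r / c ^ 2) r := by
    intro r
    exact (((hud r).hasDerivAt.const_mul (-2)).div_const (c^2))
  have hf1d : ∀ r : ℝ, HasDerivAt f₁ (p1 r) r := by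
    intro r
    exact ((hv r).exp).const_mul κp
  have hf2d : ∀ r : ℝ, r ≠ 0 → HasDerivAt f₂ (p2 r) r := by
    intro r hr
    have h1 : HasDerivAt (fun r : ℝ => c ^ 2 * r) (c ^ 2) r := by
      simpa using (hasDerivAt_id r).const_mul (c ^ 2)
    have h2 := (hasDerivAt_const r (2 * G * mp)).div h1 (by simp [hc2, hr])
    have h3 : HasDerivAt (fun r : ℝ => Λ / 3 * r ^ 2) (Λ / 3 * (2 * r)) r := by
      simpa using ((hasDerivAt_pow 2 r).const_mul (Λ / 3))
    have := ((hasDerivAt_const r (1:ℝ)).sub h2).sub h3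
    convert this using 1
    case e'_4 => rfl
    case e'_5 => rfl
    case e'_8 => rfl
    rw [hp2]
    field_simp
    ring
  have hval1 : f₁ rp = κp := by simp [hf₁, hu0]
  have hval2 : f₂ rp = κp := by rw [hf₂]; simp only; rw [hκdef]
  have hp1rp : p1 rp = d := by
    rw [hp1]; simp only [hu0, hu1]
    rw [hd]; field_simp
    ring
    simp
  have hp2rp : p2 rp = d := by
    rw [hp2, hd, hQdef]; field_simp
  have hg1 : ∀ r ∈ Iic rp, g r = f₁ r := by
    intro r hr
    rw [hg r, if_pos (mem_Iic.mp hr)]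
  have hg2 : ∀ r ∈ Ici rp, g r = f₂ r := by
    intro r hr
    rcases eq_or_lt_of_le (mem_Ici.mp hr) with h | h
    · rw [← h, hg rp, if_pos le_rfl, hu0, hval2]
      simp
    · rw [hg r, if_neg (not_le.mpr h)]
  -- one-sided first derivatives
  have hB : HasDerivWithinAt g d (Iic rp) rp := by
    have := ((hf1d rp).hasDerivWithinAt (s := Iic rp))
    rw [hp1rp] at this
    exact this.congr hg1 (hg1 rp self_mem_Iic)
  have hC : HasDerivWithinAt g d (Ici rp) rp := by
    have := ((hf2d rp hrp0).hasDerivWithinAt (s := Ici rp))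
    rw [hp2rp] at this
    exact this.congr hg2 (hg2 rp self_mem_Ici)
  have hDg : HasDerivAt g d rp := by
    have := hB.union hC
    rw [Iic_union_Ici] at this
    exact hasDerivWithinAt_univ.mp this
  -- deriv g = D
  have hderivg : deriv g = D := by
    funext r
    rcases lt_trichotomy r rp with h | h | h
    · have hev : g =ᶠ[nhds r] f₁ :=
        Filter.eventuallyEq_of_mem (Iio_mem_nhds h) (fun x hx => hg1 x (mem_Iic.mpr (le_of_lt (mem_Iio.mp hx))))
      rw [hev.deriv_eq, (hf1d r).deriv, hD]
      simp [h.le]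
    · rw [h, hDg.deriv, hD]
      simp only [le_refl, if_pos]
      exact hp1rp.symm
    · have hev : g =ᶠ[nhds r] f₂ :=
        Filter.eventuallyEq_of_mem (Ioi_mem_nhds h) (fun x hx => hg2 x (mem_Ici.mpr (le_of_lt (mem_Ioi.mp hx))))
      rw [hev.deriv_eq, (hf2d r (hrp.trans h).ne').deriv, hD]
      simp [not_le.mpr h]
  -- derivatives of p1 and p2 at rp
  have hp1d : HasDerivAt p1 s rp := by
    have hw : HasDerivAt (fun r => -2 * deriv u r / c ^ 2)
        (-2 * deriv (deriv u) rp / c ^ 2) rp :=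
      (((hud2 rp).hasDerivAt.const_mul (-2)).div_const (c^2))
    have hmul := ((hv rp).exp).mul hw
    have := hmul.const_mul κp
    convert this using 1
    case e'_4 => rfl
    case e'_5 => rfl
    case e'_8 => rfl
    rw [hu0, hu1, hu2, hs]
    have e0 : (-2 : ℝ) * 0 / c ^ 2 = 0 := by ring
    rw [e0, Real.exp_zero]
    field_simp
    ring
  have hp2d : HasDerivAt p2 s rp := by
    have h1 : HasDerivAt (fun r : ℝ => c ^ 2 * r ^ 2) (c ^ 2 * (2 * rp ^ 1)) rp := by
      simpa using ((hasDerivAt_pow 2 rp).const_mul (c ^ 2))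
    have h2 := (hasDerivAt_const rp (2 * G * mp)).div h1 (by positivity)
    have h3 : HasDerivAt (fun r : ℝ => 2 * Λ / 3 * r) (2 * Λ / 3) rp := by
      simpa using (hasDerivAt_id rp).const_mul (2 * Λ / 3)
    have := h2.sub h3
    convert this using 1
    case e'_4 => rfl
    case e'_5 => rfl
    case e'_8 => rfl
    rw [hs, hQdef]
    field_simp
    ring
  have hDIic : HasDerivWithinAt D s (Iic rp) rp := by
    refine (hp1d.hasDerivWithinAt (s := Iic rp)).congr (fun x hx => ?_) ?_
    · rw [hD]; simp [mem_Iic.mp hx]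
    · rw [hD]; simp
  have hDIci : HasDerivWithinAt D s (Ici rp) rp := by
    refine (hp2d.hasDerivWithinAt (s := Ici rp)).congr (fun x hx => ?_) ?_
    · rcases eq_or_lt_of_le (mem_Ici.mp hx) with h | h
      · rw [← h, hD]; simp only [le_refl, if_pos]; rw [hp1rp, hp2rp]
      · rw [hD]; simp [not_le.mpr h]
    · rw [hD]; simp only [le_refl, if_pos]; rw [hp1rp, hp2rp]
  have hDd : HasDerivAt D s rp := by
    have := hDIic.union hDIci
    rw [Iic_union_Ici] at this
    exact hasDerivWithinAt_univ.mp this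
  -- derivWithin g on half lines agrees with D
  have hdwI : ∀ r ∈ Iic rp, derivWithin g (Iic rp) r = D r := by
    intro r hr
    rcases eq_or_lt_of_le (mem_Iic.mp hr) with h | h
    · rw [h]
      rw [hDg.differentiableAt.derivWithin (uniqueDiffOn_Iic rp rp self_mem_Iic), hderivg]
    · rw [derivWithin_of_mem_nhds (Iic_mem_nhds h), hderivg]
  have hdwC : ∀ r ∈ Ici rp, derivWithin g (Ici rp) r = D r := by
    intro r hr
    rcases eq_or_lt_of_le (mem_Ici.mp hr) with h | h
    · rw [← h]
      rw [hDg.differentiableAt.derivWithin (uniqueDiffOn_Ici rp rp self_mem_Ici), hderivg]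
    · rw [derivWithin_of_mem_nhds (Ici_mem_nhds h), hderivg]
  have h2I : derivWithin (derivWithin g (Iic rp)) (Iic rp) rp = s := by
    rw [derivWithin_congr hdwI (hdwI rp self_mem_Iic)]
    exact hDd.hasDerivWithinAt.derivWithin (uniqueDiffOn_Iic rp rp self_mem_Iic)
  have h2C : derivWithin (derivWithin g (Ici rp)) (Ici rp) rp = s := by
    rw [derivWithin_congr hdwC (hdwC rp self_mem_Ici)]
    exact hDd.hasDerivWithinAt.derivWithin (uniqueDiffOn_Ici rp rp self_mem_Ici)
  refine ⟨hDg.continuousAt, hB, hC, h2I, h2C, hDg, ?_⟩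
  rw [hderivg]
  exact hDd
end

section
/- Let B > 0, r_+ > 0, and suppose r(u) = r_+ − (1/B)·u·(1 + ψ(u, u^{μ+1})) for 0 ≤ u < ε, where μ > 0 and ψ is a convergent double power series with ψ(0,0) = 0 (i.e., ψ(X₁, X₂) = Σ_{k₁+k₂≥1} a_{k₁k₂} X₁^{k₁} X₂^{k₂}). Then r is strictly decreasing near u = 0 and its inverse function u = u(r) satisfies u(r) = B·(r_+ − r)·(1 + φ(r_+ − r, (r_+ − r)^{μ+1})) near r = r_+ for some convergent double power series φ with φ(0,0) = 0. -/
/-!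
Write `s(u) = u (1 + ψ(u, u^(μ+1))) / B` for `r₊ - r(u)` and look for the inverse in the form
`u = B t (1 + z)` with `z = φ(t, t^(μ+1))`. Since `u^(μ+1) = B^(μ+1) t^(μ+1) (1 + z)^(μ+1)`,
the equation `s(u) = t` becomes `F((t, t^(μ+1)), z) = 1` for a function `F` analytic in all
three variables with `F((0, 0), z) = 1 + z`, so the analytic implicit function theorem yields `φ`.
Thus `g(t) = B t (1 + φ(t, t^(μ+1)))` satisfies `s ∘ g = id` on some `[0, τ]`. A continuous map
with a left inverse on an interval is injective, hence monotone, and by the intermediate value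
theorem it maps `[0, τ]` onto `[0, g τ]`; so `s` is strictly increasing there with inverse `g`.
-/

open Set Filter Topology

open scoped ContDiff in
theorem AnalyticAt.exists_implicitFunction {𝕜 E₁ E₂ F : Type*} [RCLike 𝕜]
    [NormedAddCommGroup E₁] [NormedSpace 𝕜 E₁] [CompleteSpace E₁]
    [NormedAddCommGroup E₂] [NormedSpace 𝕜 E₂] [CompleteSpace E₂]
    [NormedAddCommGroup F] [NormedSpace 𝕜 F] [CompleteSpace F]
    {f : E₁ × E₂ → F} {u : E₁ × E₂} (hf : AnalyticAt 𝕜 f u)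
    (hf₂ : (fderiv 𝕜 f u ∘L .inr 𝕜 E₁ E₂).IsInvertible) :
    ∃ g : E₁ → E₂, AnalyticAt 𝕜 g u.1 ∧ g u.1 = u.2 ∧ ∀ᶠ x in 𝓝 u.1, f (x, g x) = f u := by
  have hω : ContDiffAt 𝕜 ω f u := hf.contDiffAt
  have hω₀ : ω ≠ 0 := by simp
  exact ⟨hω.implicitFunction hω₀ hf₂, (hω.contDiffAt_implicitFunction hω₀ hf₂).analyticAt,
    hω.implicitFunction_apply_self hω₀ hf₂, hω.eventually_apply_implicitFunction hω₀ hf₂⟩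

section Order

variable {α δ : Type*} [ConditionallyCompleteLinearOrder α] [TopologicalSpace α] [OrderTopology α]
  [DenselyOrdered α] [LinearOrder δ] [TopologicalSpace δ] [OrderClosedTopology δ]
  {f : α → δ} {g : δ → α} {a b : α}

theorem ContinuousOn.leftInvOn_Icc_of_leftInvOn (hab : a ≤ b) (hf : ContinuousOn f (Icc a b))
    (hgf : LeftInvOn g f (Icc a b)) : LeftInvOn f g (Icc (f a) (f b)) := by
  intro x hx
  obtain ⟨t, ht, rfl⟩ := intermediate_value_Icc hab hf hx
  rw [hgf ht]

theorem ContinuousOn.strictMonoOn_Icc_of_leftInvOn (hab : a ≤ b) (hfab : f a ≤ f b)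
    (hf : ContinuousOn f (Icc a b)) (hgf : LeftInvOn g f (Icc a b)) :
    StrictMonoOn g (Icc (f a) (f b)) := by
  have hmono : StrictMonoOn f (Icc a b) := hf.strictMonoOn_of_injOn_Icc hab hfab hgf.injOn
  intro x hx y hy hxy
  obtain ⟨t, ht, rfl⟩ := intermediate_value_Icc hab hf hx
  obtain ⟨t', ht', rfl⟩ := intermediate_value_Icc hab hf hy
  rw [hgf ht, hgf ht']
  exact (hmono.lt_iff_lt ht ht').mp hxy

end Order

noncomputable def perturbedLinear (c e : ℝ) (f : ℝ × ℝ → ℝ) (x : ℝ) : ℝ :=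
  c * x * (1 + f (x, x ^ e))

noncomputable def inverseFactorEquation (B e : ℝ) (ψ : ℝ × ℝ → ℝ) (q : (ℝ × ℝ) × ℝ) : ℝ :=
  (1 + q.2) * (1 + ψ (B * q.1.1 * (1 + q.2), B ^ e * q.1.2 * (1 + q.2) ^ e))

section

variable {B e : ℝ} {ψ : ℝ × ℝ → ℝ}

theorem analyticAt_inverseFactorEquation (hψ : AnalyticAt ℝ ψ (0, 0)) :
    AnalyticAt ℝ (inverseFactorEquation B e ψ) ((0, 0), 0) := by
  have hz : AnalyticAt ℝ (fun q : (ℝ × ℝ) × ℝ => q.2) ((0, 0), 0) := analyticAt_snd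
  have hx : AnalyticAt ℝ (fun q : (ℝ × ℝ) × ℝ => q.1.1) ((0, 0), 0) :=
    analyticAt_fst.comp analyticAt_fst
  have hy : AnalyticAt ℝ (fun q : (ℝ × ℝ) × ℝ => q.1.2) ((0, 0), 0) :=
    analyticAt_snd.comp analyticAt_fst
  have hpow : AnalyticAt ℝ (fun q : (ℝ × ℝ) × ℝ => (1 + q.2) ^ e) ((0, 0), 0) :=
    Real.one_add_rpow_hasFPowerSeriesAt_zero.analyticAt.comp_of_eq hz rfl
  have hψ' : AnalyticAt ℝ (fun q : (ℝ × ℝ) × ℝ =>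
      ψ (B * q.1.1 * (1 + q.2), B ^ e * q.1.2 * (1 + q.2) ^ e)) ((0, 0), 0) :=
    hψ.comp_of_eq (((analyticAt_const.mul hx).mul (analyticAt_const.add hz)).prod
      ((analyticAt_const.mul hy).mul hpow)) (by simp)
  exact (analyticAt_const.add hz).mul (analyticAt_const.add hψ')

theorem inverseFactorEquation_zero_left (hψ0 : ψ (0, 0) = 0) (z : ℝ) :
    inverseFactorEquation B e ψ ((0, 0), z) = 1 + z := by
  simp [inverseFactorEquation, hψ0]

theorem fderiv_inverseFactorEquation_comp_inr (hψ : AnalyticAt ℝ ψ (0, 0))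
    (hψ0 : ψ (0, 0) = 0) :
    fderiv ℝ (inverseFactorEquation B e ψ) ((0, 0), 0) ∘L .inr ℝ (ℝ × ℝ) ℝ = .id ℝ ℝ := by
  have hd := (analyticAt_inverseFactorEquation (B := B) (e := e) hψ).differentiableAt
    |>.hasFDerivAt.comp (0 : ℝ) (ContinuousLinearMap.inr ℝ (ℝ × ℝ) ℝ).hasFDerivAt
  have hline : HasFDerivAt (fun z : ℝ => 1 + z) (.id ℝ ℝ) 0 := (hasFDerivAt_id 0).const_add 1
  refine hd.unique (hline.congr_of_eventuallyEq (Eventually.of_forall fun z => ?_))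
  simp [inverseFactorEquation_zero_left hψ0]

theorem exists_analyticAt_solution_inverseFactorEquation (hψ : AnalyticAt ℝ ψ (0, 0))
    (hψ0 : ψ (0, 0) = 0) :
    ∃ φ : ℝ × ℝ → ℝ, AnalyticAt ℝ φ (0, 0) ∧ φ (0, 0) = 0 ∧
      ∀ᶠ p in 𝓝 (0, 0), inverseFactorEquation B e ψ (p, φ p) = 1 := by
  have hinv :
      (fderiv ℝ (inverseFactorEquation B e ψ) ((0, 0), 0) ∘L .inr ℝ (ℝ × ℝ) ℝ).IsInvertible := by
    rw [fderiv_inverseFactorEquation_comp_inr hψ hψ0]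
    exact ContinuousLinearMap.isInvertible_equiv (f := .refl ℝ ℝ)
  obtain ⟨φ, hφ, hφ0, hφeq⟩ := (analyticAt_inverseFactorEquation hψ).exists_implicitFunction hinv
  refine ⟨φ, hφ, hφ0, hφeq.mono fun p hp => ?_⟩
  rw [hp, inverseFactorEquation_zero_left hψ0, add_zero]

theorem perturbedLinear_one_div_perturbedLinear (hB : 0 < B) {φ : ℝ × ℝ → ℝ} {t : ℝ} (ht : 0 ≤ t)
    (hφt : 0 ≤ 1 + φ (t, t ^ e))
    (heq : inverseFactorEquation B e ψ ((t, t ^ e), φ (t, t ^ e)) = 1) :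
    perturbedLinear (1 / B) e ψ (perturbedLinear B e φ t) = t := by
  have hpow : (B * t * (1 + φ (t, t ^ e))) ^ e = B ^ e * t ^ e * (1 + φ (t, t ^ e)) ^ e := by
    rw [Real.mul_rpow (by positivity) hφt, Real.mul_rpow hB.le ht]
  unfold inverseFactorEquation at heq
  dsimp only at heq
  unfold perturbedLinear
  rw [hpow, show 1 / B * (B * t * (1 + φ (t, t ^ e))) = t * (1 + φ (t, t ^ e)) by field_simp,
    mul_assoc, heq, mul_one]

end

theorem tendsto_self_rpow_nhds_zero {e : ℝ} (he : 0 < e) :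
    Tendsto (fun t : ℝ => (t, t ^ e)) (𝓝 0) (𝓝 (0, 0)) := by
  have h := continuousAt_id.prodMk (Real.continuousAt_rpow_const 0 e (Or.inr he.le))
  rwa [ContinuousAt, id, Real.zero_rpow he.ne'] at h

theorem continuousAt_perturbedLinear {c e : ℝ} {f : ℝ × ℝ → ℝ} {x : ℝ} (he : 0 ≤ e)
    (hf : ContinuousAt f (x, x ^ e)) : ContinuousAt (perturbedLinear c e f) x :=
  (continuousAt_const.mul continuousAt_id).mul (continuousAt_const.add
    (hf.comp_of_eq (continuousAt_id.prodMk (Real.continuousAt_rpow_const x e (Or.inr he))) rfl))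

theorem stmt_17_general (B rp μ ε : ℝ) (hB : 0 < B) (hμ : 0 < μ) (hε : 0 < ε)
    (ψ : ℝ × ℝ → ℝ) (hψ : AnalyticAt ℝ ψ (0, 0)) (hψ0 : ψ (0, 0) = 0)
    (r : ℝ → ℝ)
    (hr : ∀ u ∈ Ico (0:ℝ) ε,
      r u = rp - (1 / B) * u * (1 + ψ (u, u ^ (μ + 1)))) :
    ∃ ε' : ℝ, 0 < ε' ∧ ε' ≤ ε ∧ StrictAntiOn r (Ico 0 ε') ∧
      ∃ φ : ℝ × ℝ → ℝ, AnalyticAt ℝ φ (0, 0) ∧ φ (0, 0) = 0 ∧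
        ∀ u ∈ Ico (0:ℝ) ε',
          u = B * (rp - r u) * (1 + φ (rp - r u, (rp - r u) ^ (μ + 1))) := by
  have he : 0 < μ + 1 := by linarith
  obtain ⟨φ, hφ, hφ0, hφeq⟩ :=
    exists_analyticAt_solution_inverseFactorEquation (B := B) (e := μ + 1) hψ hψ0
  have hφpos : ∀ᶠ p in 𝓝 (0, 0), 0 < 1 + φ p :=
    continuousAt_const.eventually_lt (continuousAt_const.add hφ.continuousAt) (by simp [hφ0])
  obtain ⟨τ, hτ, hτsub⟩ := mem_nhdsGE_iff_exists_Icc_subset.mp <| nhdsWithin_le_nhds <|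
    (tendsto_self_rpow_nhds_zero he).eventually <|
      (hφ.eventually_analyticAt.mono fun _ hp => hp.continuousAt).and (hφpos.and hφeq)
  set g := perturbedLinear B (μ + 1) φ
  set s := perturbedLinear (1 / B) (μ + 1) ψ
  have hcont : ContinuousOn g (Icc 0 τ) := fun t ht =>
    (continuousAt_perturbedLinear he.le (hτsub ht).1).continuousWithinAt
  have hinv : LeftInvOn s g (Icc 0 τ) := fun t ht =>
    perturbedLinear_one_div_perturbedLinear hB ht.1 (hτsub ht).2.1.le (hτsub ht).2.2
  have hg0 : g 0 = 0 := by simp [g, perturbedLinear]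
  have hgτ : 0 < g τ := by
    have := (hτsub ⟨hτ.le, le_rfl⟩).2.1
    simp only [g, perturbedLinear]
    positivity
  set ε' := min ε (g τ)
  have hsub : Ico 0 ε' ⊆ Icc (g 0) (g τ) := fun u hu =>
    ⟨hg0.symm ▸ hu.1, (hu.2.trans_le (min_le_right _ _)).le⟩
  have hrs : ∀ u ∈ Ico 0 ε', rp - r u = s u := fun u hu => by
    rw [hr u ⟨hu.1, hu.2.trans_le (min_le_left _ _)⟩, sub_sub_cancel]; rfl
  refine ⟨ε', lt_min hε hgτ, min_le_left _ _, fun x hx y hy hxy => ?_, φ, hφ, hφ0, fun u hu => ?_⟩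
  · have := hcont.strictMonoOn_Icc_of_leftInvOn hτ.le (hg0.symm ▸ hgτ.le) hinv
      (hsub hx) (hsub hy) hxy
    linarith [hrs x hx, hrs y hy]
  · rw [hrs u hu]
    exact (hcont.leftInvOn_Icc_of_leftInvOn hτ.le hinv (hsub hu)).symm

theorem stmt_17 (B rp μ ε : ℝ) (hB : 0 < B) (hrp : 0 < rp) (hμ : 0 < μ) (hε : 0 < ε)
    (ψ : ℝ × ℝ → ℝ) (hψ : AnalyticAt ℝ ψ (0, 0)) (hψ0 : ψ (0, 0) = 0)
    (r : ℝ → ℝ)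
    (hr : ∀ u ∈ Ico (0:ℝ) ε,
      r u = rp - (1 / B) * u * (1 + ψ (u, u ^ (μ + 1)))) :
    ∃ ε' : ℝ, 0 < ε' ∧ ε' ≤ ε ∧ StrictAntiOn r (Ico 0 ε') ∧
      ∃ φ : ℝ × ℝ → ℝ, AnalyticAt ℝ φ (0, 0) ∧ φ (0, 0) = 0 ∧
        ∀ u ∈ Ico (0:ℝ) ε',
          u = B * (rp - r u) * (1 + φ (rp - r u, (rp - r u) ^ (μ + 1))) :=
  stmt_17_general B rp μ ε hB hμ hε ψ hψ hψ0 r hr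
end

section
/- Suppose 1 < μ < ∞, and (m, u) : (0, r_+) → ℝ² is a solution of dm/dr = 4πr²A₁ u^μ Ω_ρ(u/c²), du/dr = −[G(m + (4π/c²)r³ A A₁^γ u^{μ+1} Ω_P(u/c²)) − (c²Λ/3)r³] / [r²(1 − 2Gm/(c²r) − (Λ/3)r²)], with u > 0 and du/dr < 0 on (0, r_+), u(r) → 0 and m(r) → m_+ as r → r_+⁻, where κ_+ := 1 − 2Gm_+/(c²r_+) − (Λ/3)r_+² > 0 and Q_+ := Gm_+ − (c²Λ/3)r_+³ > 0. If Ω_ρ, Ω_P are continuous with Ω_ρ(0) = Ω_P(0) = 1, then u extends to a C¹ function on a neighborhood of r_+ with u'(r_+) = −Q_+/(r_+²κ_+) < 0, and u(r) = B(r_+ − r)(1 + o(1)) as r → r_+⁻ with B = Q_+/(r_+²κ_+). -/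
open Real Set Filter
open scoped Topology

theorem stmt_18 (A A1 γ G c Λ rp mp κp Qp μ : ℝ)
    (hA : 0 < A) (hG : 0 < G) (hc : 0 < c) (hΛ : 0 < Λ) (hrp : 0 < rp) (hmp : 0 < mp)
    (hγ : 1 < γ) (hγ2 : γ < 2) (hμ : μ = 1 / (γ - 1))
    (hA1 : A1 = ((γ - 1) / (γ * A)) ^ (1 / (γ - 1)))
    (Ωρ ΩP : ℝ → ℝ) (hΩρc : Continuous Ωρ) (hΩPc : Continuous ΩP)
    (hΩρ0 : Ωρ 0 = 1) (hΩP0 : ΩP 0 = 1)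
    (m u : ℝ → ℝ)
    (hm : ∀ r ∈ Ioo (0:ℝ) rp,
      HasDerivAt m (4 * π * r ^ 2 * A1 * (u r) ^ μ * Ωρ (u r / c ^ 2)) r)
    (hu : ∀ r ∈ Ioo (0:ℝ) rp,
      HasDerivAt u
        (-(G * (m r + 4 * π / c ^ 2 * r ^ 3 * A * A1 ^ γ * (u r) ^ (μ + 1) * ΩP (u r / c ^ 2))
            - c ^ 2 * Λ / 3 * r ^ 3) /
          (r ^ 2 * (1 - 2 * G * (m r) / (c ^ 2 * r) - Λ / 3 * r ^ 2))) r)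
    (hupos : ∀ r ∈ Ioo (0:ℝ) rp, 0 < u r)
    (hudec : ∀ r ∈ Ioo (0:ℝ) rp, deriv u r < 0)
    (hulim : Tendsto u (nhdsWithin rp (Iio rp)) (nhds 0))
    (hmlim : Tendsto m (nhdsWithin rp (Iio rp)) (nhds mp))
    (hκp : κp = 1 - 2 * G * mp / (c ^ 2 * rp) - Λ / 3 * rp ^ 2) (hκpos : 0 < κp)
    (hQp : Qp = G * mp - c ^ 2 * Λ / 3 * rp ^ 3) (hQpos : 0 < Qp) :
    ∃ v : ℝ → ℝ, ∃ ε > 0,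
      ContDiffOn ℝ 1 v (Ioo (rp - ε) (rp + ε)) ∧
      EqOn v u (Ioo (rp - ε) rp) ∧ v rp = 0 ∧
      HasDerivAt v (-(Qp / (rp ^ 2 * κp))) rp ∧
      -(Qp / (rp ^ 2 * κp)) < 0 ∧
      Tendsto (fun r => u r / (Qp / (rp ^ 2 * κp) * (rp - r)))
        (nhdsWithin rp (Iio rp)) (nhds 1) := by
  have hγ1 : (0:ℝ) < γ - 1 := by linarith
  have hμpos : 0 < μ := by rw [hμ]; positivity
  have hμ1 : 0 < μ + 1 := by linarith
  set B := Qp / (rp ^ 2 * κp) with hB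
  have hBpos : 0 < B := by rw [hB]; positivity
  set Φ : ℝ × ℝ × ℝ → ℝ := fun p =>
    -(G * (p.2.1 + 4 * π / c ^ 2 * p.1 ^ 3 * A * A1 ^ γ * p.2.2 ^ (μ + 1)
          * ΩP (p.2.2 / c ^ 2)) - c ^ 2 * Λ / 3 * p.1 ^ 3) /
      (p.1 ^ 2 * (1 - 2 * G * p.2.1 / (c ^ 2 * p.1) - Λ / 3 * p.1 ^ 2)) with hΦdef
  -- continuity of Φ where the denominator does not vanish
  have hΦcont : ∀ q : ℝ × ℝ × ℝ,
      q.1 ^ 2 * (1 - 2 * G * q.2.1 / (c ^ 2 * q.1) - Λ / 3 * q.1 ^ 2) ≠ 0 →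
      ContinuousAt Φ q := by
    intro q hq
    have hq1 : q.1 ≠ 0 := by
      intro h0
      apply hq
      rw [h0]; ring
    have h1 : ContinuousAt (fun p : ℝ × ℝ × ℝ => p.1) q := continuous_fst.continuousAt
    have h2 : ContinuousAt (fun p : ℝ × ℝ × ℝ => p.2.1) q := (continuous_snd.fst).continuousAt
    have h3 : ContinuousAt (fun p : ℝ × ℝ × ℝ => p.2.2) q := (continuous_snd.snd).continuousAt
    have hrpow : ContinuousAt (fun p : ℝ × ℝ × ℝ => p.2.2 ^ (μ + 1)) q :=
      h3.rpow_const (Or.inr hμ1.le)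
    have hΩ : ContinuousAt (fun p : ℝ × ℝ × ℝ => ΩP (p.2.2 / c ^ 2)) q :=
      hΩPc.continuousAt.comp (h3.div_const _)
    have hnum : ContinuousAt (fun p : ℝ × ℝ × ℝ =>
        G * (p.2.1 + 4 * π / c ^ 2 * p.1 ^ 3 * A * A1 ^ γ * p.2.2 ^ (μ + 1)
          * ΩP (p.2.2 / c ^ 2)) - c ^ 2 * Λ / 3 * p.1 ^ 3) q := by
      apply ContinuousAt.sub
      · apply continuousAt_const.mul
        exact h2.add (((((continuousAt_const.mul (h1.pow 3)).mul
          continuousAt_const).mul continuousAt_const).mul hrpow).mul hΩ)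
      · exact continuousAt_const.mul (h1.pow 3)
    have hden : ContinuousAt (fun p : ℝ × ℝ × ℝ =>
        p.1 ^ 2 * (1 - 2 * G * p.2.1 / (c ^ 2 * p.1) - Λ / 3 * p.1 ^ 2)) q := by
      apply (h1.pow 2).mul
      apply ContinuousAt.sub
      · apply continuousAt_const.sub
        exact (continuousAt_const.mul h2).div (continuousAt_const.mul h1)
          (by positivity)
      · exact continuousAt_const.mul (h1.pow 2)
    exact hnum.neg.div hden hq
  have hden0 : ((rp, mp, (0:ℝ)) : ℝ × ℝ × ℝ).1 ^ 2 *
      (1 - 2 * G * ((rp, mp, (0:ℝ)) : ℝ × ℝ × ℝ).2.1 / (c ^ 2 * ((rp, mp, (0:ℝ)) : ℝ × ℝ × ℝ).1)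
        - Λ / 3 * ((rp, mp, (0:ℝ)) : ℝ × ℝ × ℝ).1 ^ 2) ≠ 0 := by
    show rp ^ 2 * (1 - 2 * G * mp / (c ^ 2 * rp) - Λ / 3 * rp ^ 2) ≠ 0
    rw [← hκp]; positivity
  have hΦval : Φ (rp, mp, 0) = -B := by
    show -(G * (mp + 4 * π / c ^ 2 * rp ^ 3 * A * A1 ^ γ * (0:ℝ) ^ (μ + 1)
          * ΩP ((0:ℝ) / c ^ 2)) - c ^ 2 * Λ / 3 * rp ^ 3) /
      (rp ^ 2 * (1 - 2 * G * mp / (c ^ 2 * rp) - Λ / 3 * rp ^ 2)) = -B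
    rw [Real.zero_rpow hμ1.ne', hB, hQp, hκp]
    ring
  have tr : Tendsto (fun r : ℝ => r) (𝓝[<] rp) (𝓝 rp) :=
    tendsto_id.mono_left nhdsWithin_le_nhds
  have hψlim : Tendsto (fun r => ((r, m r, u r) : ℝ × ℝ × ℝ)) (𝓝[<] rp)
      (𝓝 ((rp, mp, (0:ℝ)) : ℝ × ℝ × ℝ)) :=
    tr.prodMk_nhds (hmlim.prodMk_nhds hulim)
  have hFlim : Tendsto (fun r => Φ (r, m r, u r)) (𝓝[<] rp) (𝓝 (-B)) := by
    have h := ((hΦcont _ hden0).tendsto).comp hψlim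
    rw [hΦval] at h
    exact h
  have hevIoo : ∀ᶠ r in 𝓝[<] rp, r ∈ Ioo (0:ℝ) rp :=
    Ioo_mem_nhdsLT_of_mem ⟨hrp, le_rfl⟩
  -- the squeeze estimate
  have hsq : ∀ δ > (0:ℝ), ∀ᶠ r in 𝓝[<] rp,
      (B - δ) * (rp - r) ≤ u r ∧ u r ≤ (B + δ) * (rp - r) := by
    intro δ hδ
    have hFδ : ∀ᶠ r in 𝓝[<] rp, |Φ (r, m r, u r) + B| < δ := by
      have h := Metric.tendsto_nhds.1 hFlim δ hδ
      simpa [Real.dist_eq, sub_neg_eq_add] using h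
    obtain ⟨b, hb, hbsub⟩ := mem_nhdsLT_iff_exists_Ioo_subset.1
      (eventually_iff.1 (hevIoo.and hFδ))
    have hprop : ∀ t ∈ Ioo b rp, t ∈ Ioo (0:ℝ) rp ∧ |Φ (t, m t, u t) + B| < δ :=
      fun t ht => hbsub ht
    have hmono : StrictMonoOn (fun t => u t + (B + δ) * t) (Ioo b rp) := by
      apply strictMonoOn_of_deriv_pos (convex_Ioo _ _)
      · exact fun t ht => (((hu t (hprop t ht).1).continuousAt).add
          ((continuous_const.mul continuous_id).continuousAt)).continuousWithinAt
      · intro t ht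
        rw [interior_Ioo] at ht
        have habs := (hprop t ht).2
        rw [abs_lt] at habs
        have hd : HasDerivAt (fun s => u s + (B + δ) * s) (Φ (t, m t, u t) + (B + δ)) t := by
          have h2 : HasDerivAt (fun s : ℝ => (B + δ) * s) (B + δ) t := by
            simpa using (hasDerivAt_id t).const_mul (B + δ)
          exact (hu t (hprop t ht).1).add h2
        rw [hd.deriv]
        linarith [habs.1]
    have hanti : StrictAntiOn (fun t => u t + (B - δ) * t) (Ioo b rp) := by
      apply strictAntiOn_of_deriv_neg (convex_Ioo _ _)
      · exact fun t ht => (((hu t (hprop t ht).1).continuousAt).add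
          ((continuous_const.mul continuous_id).continuousAt)).continuousWithinAt
      · intro t ht
        rw [interior_Ioo] at ht
        have habs := (hprop t ht).2
        rw [abs_lt] at habs
        have hd : HasDerivAt (fun s => u s + (B - δ) * s) (Φ (t, m t, u t) + (B - δ)) t := by
          have h2 : HasDerivAt (fun s : ℝ => (B - δ) * s) (B - δ) t := by
            simpa using (hasDerivAt_id t).const_mul (B - δ)
          exact (hu t (hprop t ht).1).add h2
        rw [hd.deriv]
        linarith [habs.2]
    filter_upwards [Ioo_mem_nhdsLT_of_mem (show rp ∈ Ioc b rp from ⟨hb, le_rfl⟩)] with r hr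
    have hlim1 : Tendsto (fun s => u s + (B + δ) * s) (𝓝[<] rp) (𝓝 (0 + (B + δ) * rp)) :=
      hulim.add (tendsto_const_nhds.mul tr)
    have hlim2 : Tendsto (fun s => u s + (B - δ) * s) (𝓝[<] rp) (𝓝 (0 + (B - δ) * rp)) :=
      hulim.add (tendsto_const_nhds.mul tr)
    have hub : u r + (B + δ) * r ≤ 0 + (B + δ) * rp := by
      refine ge_of_tendsto hlim1 ?_
      filter_upwards [Ioo_mem_nhdsLT_of_mem (show rp ∈ Ioc r rp from ⟨hr.2, le_rfl⟩)] with s hs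
      exact (hmono hr ⟨lt_trans hr.1 hs.1, hs.2⟩ hs.1).le
    have hlb : 0 + (B - δ) * rp ≤ u r + (B - δ) * r := by
      refine le_of_tendsto hlim2 ?_
      filter_upwards [Ioo_mem_nhdsLT_of_mem (show rp ∈ Ioc r rp from ⟨hr.2, le_rfl⟩)] with s hs
      exact (hanti hr ⟨lt_trans hr.1 hs.1, hs.2⟩ hs.1).le
    constructor
    · have h : (B - δ) * (rp - r) = 0 + (B - δ) * rp - (B - δ) * r := by ring
      linarith
    · have h : (B + δ) * (rp - r) = 0 + (B + δ) * rp - (B + δ) * r := by ring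
      linarith
  -- the ratio limit
  have hratio : Tendsto (fun r => u r / (B * (rp - r))) (𝓝[<] rp) (𝓝 1) := by
    rw [Metric.tendsto_nhds]
    intro ε hε
    have hδ : (0:ℝ) < B * ε / 2 := by positivity
    filter_upwards [hsq (B * ε / 2) hδ,
      Ioo_mem_nhdsLT_of_mem (show rp ∈ Ioc (rp - 1) rp from ⟨by linarith, le_rfl⟩)]
      with r hr hr2
    have ht : 0 < rp - r := sub_pos.2 hr2.2
    have hBt : 0 < B * (rp - r) := by positivity
    have hq1 : u r / (B * (rp - r)) ≤ 1 + ε / 2 := by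
      rw [div_le_iff₀ hBt]
      have h : (1 + ε / 2) * (B * (rp - r)) = (B + B * ε / 2) * (rp - r) := by ring
      linarith [hr.2]
    have hq2 : 1 - ε / 2 ≤ u r / (B * (rp - r)) := by
      rw [le_div_iff₀ hBt]
      have h : (1 - ε / 2) * (B * (rp - r)) = (B - B * ε / 2) * (rp - r) := by ring
      linarith [hr.1]
    rw [Real.dist_eq, abs_lt]
    constructor <;> linarith
  -- left-sided slope limit
  have hslopeL : Tendsto (fun r => u r / (r - rp)) (𝓝[<] rp) (𝓝 (-B)) := by
    have h : Tendsto (fun r => -(B * (u r / (B * (rp - r))))) (𝓝[<] rp) (𝓝 (-(B * 1))) :=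
      (tendsto_const_nhds.mul hratio).neg
    rw [mul_one] at h
    refine h.congr' ?_
    filter_upwards [self_mem_nhdsWithin] with r hr
    have h1 : rp - r ≠ 0 := sub_ne_zero.2 (ne_of_gt hr)
    have h2 : r - rp ≠ 0 := sub_ne_zero.2 (ne_of_lt hr)
    field_simp
    ring
  -- the extension
  set v : ℝ → ℝ := fun r => if r < rp then u r else -B * (r - rp) with hvdef
  have hv0 : v rp = 0 := by
    show (if rp < rp then u rp else -B * (rp - rp)) = 0
    rw [if_neg (lt_irrefl rp)]
    ring
  have hvderiv : HasDerivAt v (-B) rp := by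
    rw [hasDerivAt_iff_tendsto_slope, ← nhdsLT_sup_nhdsGT, tendsto_sup]
    constructor
    · refine hslopeL.congr' ?_
      filter_upwards [self_mem_nhdsWithin] with r hr
      have hvr : v r = u r := if_pos hr
      rw [slope_def_field, hvr, hv0, sub_zero]
    · refine Tendsto.congr' ?_ tendsto_const_nhds
      filter_upwards [self_mem_nhdsWithin] with r hr
      have hvr : v r = -B * (r - rp) := if_neg (not_lt.2 (le_of_lt hr))
      rw [slope_def_field, hvr, hv0, sub_zero,
        mul_div_cancel_right₀ _ (sub_ne_zero.2 (ne_of_gt hr))]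
  -- choose the interval
  have hevpos : ∀ᶠ r in 𝓝[<] rp,
      0 < r ^ 2 * (1 - 2 * G * (m r) / (c ^ 2 * r) - Λ / 3 * r ^ 2) := by
    have hdentend : Tendsto (fun r => r ^ 2 * (1 - 2 * G * (m r) / (c ^ 2 * r) - Λ / 3 * r ^ 2))
        (𝓝[<] rp) (𝓝 (rp ^ 2 * κp)) := by
      rw [hκp]
      exact (tr.pow 2).mul (((tendsto_const_nhds.sub ((tendsto_const_nhds.mul hmlim).div
        (tendsto_const_nhds.mul tr) (by positivity))).sub (tendsto_const_nhds.mul (tr.pow 2))))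
    exact hdentend.eventually (eventually_gt_nhds (by positivity))
  obtain ⟨a, ha, hasub⟩ := mem_nhdsLT_iff_exists_Ioo_subset.1
    (eventually_iff.1 (hevIoo.and hevpos))
  have haprop : ∀ r ∈ Ioo a rp, r ∈ Ioo (0:ℝ) rp ∧
      0 < r ^ 2 * (1 - 2 * G * (m r) / (c ^ 2 * r) - Λ / 3 * r ^ 2) :=
    fun r hr => hasub hr
  have harp : a < rp := ha
  have hra : rp - (rp - a) = a := by ring
  set g : ℝ → ℝ := fun r => if r < rp then Φ (r, m r, u r) else -B with hgdef
  have hvg : ∀ r ∈ Ioo (rp - (rp - a)) (rp + (rp - a)), HasDerivAt v (g r) r := by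
    intro r hr
    rw [hra] at hr
    rcases lt_trichotomy r rp with h | h | h
    · have hr' : r ∈ Ioo a rp := ⟨hr.1, h⟩
      have hu' : HasDerivAt u (Φ (r, m r, u r)) r := hu r (haprop r hr').1
      have hveq : v =ᶠ[𝓝 r] u := by
        filter_upwards [Iio_mem_nhds h] with s hs
        exact if_pos hs
      have := hu'.congr_of_eventuallyEq hveq
      rwa [show g r = Φ (r, m r, u r) from if_pos h]
    · rw [show g r = -B from if_neg (h ▸ lt_irrefl rp)]
      exact h ▸ hvderiv
    · have hlin : HasDerivAt (fun x : ℝ => -B * (x - rp)) (-B) r := by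
        simpa using ((hasDerivAt_id r).sub_const rp).const_mul (-B)
      have hveq : v =ᶠ[𝓝 r] fun x => -B * (x - rp) := by
        filter_upwards [Ioi_mem_nhds h] with s hs
        exact if_neg (not_lt.2 (le_of_lt hs))
      have := hlin.congr_of_eventuallyEq hveq
      rwa [show g r = -B from if_neg (not_lt.2 (le_of_lt h))]
  have hgcont : ContinuousOn g (Ioo (rp - (rp - a)) (rp + (rp - a))) := by
    intro r hr
    rw [hra] at hr
    rcases lt_trichotomy r rp with h | h | h
    · apply ContinuousAt.continuousWithinAt
      have hr' : r ∈ Ioo a rp := ⟨hr.1, h⟩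
      have hψc : ContinuousAt (fun x : ℝ => ((x, m x, u x) : ℝ × ℝ × ℝ)) r :=
        continuousAt_id.prodMk ((hm r (haprop r hr').1).continuousAt.prodMk
          (hu r (haprop r hr').1).continuousAt)
      have hc : ContinuousAt (fun r => Φ (r, m r, u r)) r :=
        (hΦcont (r, m r, u r) (ne_of_gt (haprop r hr').2)).tendsto.comp hψc
      refine hc.congr ?_
      filter_upwards [Iio_mem_nhds h] with s hs
      exact (if_pos hs).symm
    · apply ContinuousAt.continuousWithinAt
      subst h
      have hgval : g r = -B := if_neg (lt_irrefl r)
      rw [ContinuousAt, hgval, ← nhdsLT_sup_nhdsGE, tendsto_sup]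
      constructor
      · refine hFlim.congr' ?_
        filter_upwards [self_mem_nhdsWithin] with s hs
        exact (if_pos hs).symm
      · refine Tendsto.congr' ?_ tendsto_const_nhds
        filter_upwards [self_mem_nhdsWithin] with s hs
        exact (if_neg (not_lt.2 hs)).symm
    · apply ContinuousAt.continuousWithinAt
      have hcb : ContinuousAt (fun _ : ℝ => -B) r := continuousAt_const
      refine hcb.congr ?_
      filter_upwards [Ioi_mem_nhds h] with s hs
      exact ((if_neg (not_lt.2 (le_of_lt hs))).symm : (-B : ℝ) = g s)
  have hεpos : (0:ℝ) < rp - a := by linarith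
  refine ⟨v, rp - a, hεpos, ?_, ?_, hv0, hvderiv, ?_, ?_⟩
  · -- C¹
    have hopen : IsOpen (Ioo (rp - (rp - a)) (rp + (rp - a))) := isOpen_Ioo
    rw [show ((1 : WithTop ℕ∞)) = 0 + 1 by norm_num,
      contDiffOn_succ_iff_deriv_of_isOpen hopen]
    refine ⟨fun r hr => (hvg r hr).differentiableAt.differentiableWithinAt, ?_, ?_⟩
    · intro h; simp at h
    · rw [contDiffOn_zero]
      exact hgcont.congr fun r hr => (hvg r hr).deriv
  · -- EqOn
    intro r hr
    rw [hra] at hr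
    exact if_pos hr.2
  · exact neg_lt_zero.2 hBpos
  · exact hratio
end
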